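/- arXiv:math/0701714 — 2 statements merged into one kernel-verified Lean document; each statement's English description precedes it below -/
import Mathlib

section
/- Every LC-loop satisfies the identity C14: if a loop satisfies (x·x)·(y·z) = (x·(x·y))·z for all x,y,z, then it satisfies x·(y·(y·z)) = (x·(y·y))·z for all x,y,z. -/
/-! Putting `z = e` in the LC-identity shows that the loop is left alternative, and then the
identity says that every square is left nuclear. For a left nuclear `a`, comparing
`q · (q · w) = (q · q) · w` for `q = a · x` and cancelling `a` gives the left Bol identity
`x · (a · (x · w)) = (x · (a · x)) · w`. With `w = (x \ e) · v` and the left inverse property this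
reads `x · (a · v) = n · ((x \ e) · v)` for `n = x · (a · x)`. Now `n` is left nuclear, since
`a · n = (a · x) · (a · x)` is a square, so the right side is `(n · (x \ e)) · v = (x · a) · v`.
Applied to `a = y · y` this is C14. -/

/-- A loop: a set with multiplication, left division `ldiv` (written `\`),
right division `rdiv` (written `/`), and a two-sided identity `e`. -/
structure Loop (α : Type) where
  mul : α → α → α
  ldiv : α → α → α
  rdiv : α → α → α
  e : α
  mul_ldiv : ∀ a b, mul a (ldiv a b) = b
  rdiv_mul : ∀ a b, mul (rdiv b a) a = b
  ldiv_mul : ∀ a b, ldiv a (mul a b) = b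
  mul_rdiv : ∀ a b, rdiv (mul b a) a = b
  e_mul : ∀ a, mul e a = a
  mul_e : ∀ a, mul a e = a

namespace Loop

variable {α : Type} (L : Loop α)

local infixl:70 " ⬝ " => L.mul

def IsLC : Prop := ∀ x y z, (x ⬝ x) ⬝ (y ⬝ z) = (x ⬝ (x ⬝ y)) ⬝ z

def IsLeftAlternative : Prop := ∀ x y, x ⬝ (x ⬝ y) = (x ⬝ x) ⬝ y

def IsLeftNuclear (a : α) : Prop := ∀ u v, a ⬝ (u ⬝ v) = (a ⬝ u) ⬝ v

def IsMiddleNuclear (a : α) : Prop := ∀ u v, u ⬝ (a ⬝ v) = (u ⬝ a) ⬝ v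

variable {L}

theorem mul_left_cancel {a b c : α} (h : a ⬝ b = a ⬝ c) : b = c := by
  rw [← L.ldiv_mul a b, h, L.ldiv_mul]

theorem IsLC.isLeftAlternative (h : L.IsLC) : L.IsLeftAlternative
  | x, y => by simpa only [L.mul_e] using (h x y L.e).symm

theorem IsLC.isLeftNuclear_mul_self (h : L.IsLC) (x : α) : L.IsLeftNuclear (x ⬝ x) :=
  fun u v => by rw [h, h.isLeftAlternative]

theorem IsLC.mul_ldiv_e_mul_cancel_left (h : L.IsLC) (x v : α) : x ⬝ (L.ldiv x L.e ⬝ v) = v := by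
  apply mul_left_cancel (a := x)
  rw [h.isLeftAlternative, h, L.mul_ldiv, L.mul_e]

theorem IsLeftNuclear.of_mul {a n : α} (ha : L.IsLeftNuclear a) (han : L.IsLeftNuclear (a ⬝ n)) :
    L.IsLeftNuclear n := fun u v => by
  apply mul_left_cancel (a := a)
  rw [ha, han, ← ha, ← ha]

theorem IsLeftAlternative.leftBol_of_isLeftNuclear (hla : L.IsLeftAlternative) {a : α}
    (ha : L.IsLeftNuclear a) (x w : α) : x ⬝ (a ⬝ (x ⬝ w)) = (x ⬝ (a ⬝ x)) ⬝ w := by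
  apply mul_left_cancel (a := a)
  have := hla (a ⬝ x) w
  rwa [← ha, ← ha, ← ha, ← ha] at this

theorem IsLC.isLeftNuclear_mul_mul (h : L.IsLC) {a : α} (ha : L.IsLeftNuclear a) (x : α) :
    L.IsLeftNuclear (x ⬝ (a ⬝ x)) := by
  refine ha.of_mul ?_
  rw [ha]
  exact h.isLeftNuclear_mul_self (a ⬝ x)

theorem IsLC.isMiddleNuclear_of_isLeftNuclear (h : L.IsLC) {a : α} (ha : L.IsLeftNuclear a) :
    L.IsMiddleNuclear a := fun x v => by
  set n := x ⬝ (a ⬝ x)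
  have hbol : ∀ v, x ⬝ (a ⬝ v) = n ⬝ (L.ldiv x L.e ⬝ v) := fun v => by
    rw [← h.isLeftAlternative.leftBol_of_isLeftNuclear ha, h.mul_ldiv_e_mul_cancel_left]
  have hxa : x ⬝ a = n ⬝ L.ldiv x L.e := by simpa only [L.mul_e] using hbol L.e
  rw [hbol, hxa, h.isLeftNuclear_mul_mul ha]

end Loop

theorem stmt_9 (α : Type) (L : Loop α) (h : ∀ x y z : α, L.mul (L.mul x x) (L.mul y z) = L.mul (L.mul x (L.mul x y)) z) :
    ∀ x y z : α, L.mul x (L.mul y (L.mul y z)) = L.mul (L.mul x (L.mul y y)) z := by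
  have hLC : L.IsLC := h
  intro x y z
  rw [hLC.isLeftAlternative y z]
  exact hLC.isMiddleNuclear_of_isLeftNuclear (hLC.isLeftNuclear_mul_self y) x z
end

section
/- A loop satisfying C14 has the left inverse property: if a loop satisfies x·(y·(y·z)) = (x·(y·y))·z for all x,y,z, then (e/x)·(x·y) = y for all x,y. -/
/-!
Write `x⁻ = e/x` and `xʳ = x\e`. Instantiating C14 at `(x⁻, x, xʳ)` collapses its left side to
`x⁻·x = e`, so `(x⁻·x²)·xʳ = e = x·xʳ` and right cancellation gives `x⁻·x² = x`. Instantiating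
C14 at `(x⁻, x, x\y)` then reads `x⁻·(x·y) = (x⁻·x²)·(x\y) = x·(x\y) = y`.
-/

namespace Loop

variable {α : Type} (L : Loop α)

def C14 : Prop :=
  ∀ x y z : α, L.mul x (L.mul y (L.mul y z)) = L.mul (L.mul x (L.mul y y)) z

variable {L}

theorem mul_right_cancel {a b c : α} (h : L.mul a c = L.mul b c) : a = b := by
  rw [← L.mul_rdiv c a, h, L.mul_rdiv]

theorem C14.rdiv_e_mul_mul_self (hL : L.C14) (x : α) :
    L.mul (L.rdiv L.e x) (L.mul x x) = x := by
  have key := hL (L.rdiv L.e x) x (L.ldiv x L.e)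
  rw [L.mul_ldiv, L.mul_e, L.rdiv_mul] at key
  exact L.mul_right_cancel (key.symm.trans (L.mul_ldiv x L.e).symm)

theorem C14.rdiv_e_mul_mul (hL : L.C14) (x y : α) :
    L.mul (L.rdiv L.e x) (L.mul x y) = y := by
  have key := hL (L.rdiv L.e x) x (L.ldiv x y)
  rwa [L.mul_ldiv, hL.rdiv_e_mul_mul_self, L.mul_ldiv] at key

end Loop

theorem stmt_12 (α : Type) (L : Loop α) (h : ∀ x y z : α, L.mul x (L.mul y (L.mul y z)) = L.mul (L.mul x (L.mul y y)) z) :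
    ∀ x y : α, L.mul (L.rdiv L.e x) (L.mul x y) = y :=
  Loop.C14.rdiv_e_mul_mul h
end
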